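/- Let S be a numerical semigroup with 2K \ K = {F(S) − x₁, …, F(S) − x_r, F(S)} where each x_i is a minimal generator of S. Then: (1) for every i there exist f_j, f_k ∈ PF(S) with f_j + f_k = F(S) + x_i; (2) for every f ∈ PF(S) \ {F(S)}, either F(S) − f ∈ PF(S) or F(S) − f + x_i ∈ PF(S) for some i. -/

import Mathlib

open Set Pointwise

def IsNumSgrp (S : Set ℤ) : Prop :=
  0 ∈ S ∧ (∀ a ∈ S, ∀ b ∈ S, a + b ∈ S) ∧ (∀ a ∈ S, 0 ≤ a) ∧ ∃ c : ℤ, ∀ z, c ≤ z → z ∈ S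

def maxId (S : Set ℤ) : Set ℤ := S \ {0}

def subI (I J : Set ℤ) : Set ℤ := {x : ℤ | ∀ j ∈ J, x + j ∈ I}

def PF (S I : Set ℤ) : Set ℤ := subI I (maxId S) \ I

def stdK (S : Set ℤ) (F : ℤ) : Set ℤ := {x : ℤ | 0 ≤ x ∧ F - x ∉ S}

def IsFrobOf (I : Set ℤ) (FI : ℤ) : Prop := FI ∉ I ∧ ∀ z : ℤ, FI < z → z ∈ I

def IsRelIdeal (S I : Set ℤ) : Prop :=
  I.Nonempty ∧ (∀ i ∈ I, ∀ s ∈ S, i + s ∈ I) ∧ ∃ z ∈ S, ∀ i ∈ I, z + i ∈ S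

def tilde (I : Set ℤ) (d : ℤ) : Set ℤ := (fun x => x + d) '' I

def IsAlmostCanonical (S : Set ℤ) (F : ℤ) (I : Set ℤ) : Prop :=
  ∃ FI : ℤ, IsFrobOf I FI ∧ subI (tilde I (F - FI)) (maxId S) = stdK S F ∪ {F}

def IsMinGen (S : Set ℤ) (x : ℤ) : Prop := x ∈ maxId S \ (maxId S + maxId S)

def IsMult (S : Set ℤ) (e : ℤ) : Prop := e ∈ maxId S ∧ ∀ m ∈ maxId S, e ≤ m

def genK (S : Set ℤ) (F : ℤ) : Set ℤ := (AddSubmonoid.closure (stdK S F) : Set ℤ)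

def nK (K : Set ℤ) : ℕ → Set ℤ
  | 0 => {0}
  | 1 => K
  | n + 2 => nK K (n + 1) + K

def IsGAS (S : Set ℤ) (F : ℤ) : Prop :=
  stdK S F + stdK S F = stdK S F ∨
  ∃ X : Finset ℤ, (∀ x ∈ X, IsMinGen S x) ∧ (∀ x ∈ X, ∀ y ∈ X, x - y ∉ PF S S) ∧
    (stdK S F + stdK S F) \ stdK S F = (fun x => F - x) '' (X : Set ℤ) ∪ {F}

def IsAlmostSym (S : Set ℤ) (F : ℤ) : Prop := subI S (maxId S) = stdK S F ∪ {F}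

def apery (I : Set ℤ) (e : ℤ) : Set ℤ := {i ∈ I | i - e ∉ I}

/-!
The canonical ideal `K` is generated, as an `S`-ideal, by the elements `F - f` with `f ∈ PF(S)`:
these are exactly its minimal elements for the order `a ≤ b ↔ b - a ∈ S`. The hypothesis on
`2K \ K` says that whenever `w ∈ M` and `F - w ∈ 2K`, then `w ∈ X`. Since no `x + t` with
`x ∈ X`, `t ∈ M` is a minimal generator, `F - (x + t) ∉ 2K`; this forces a decomposition of
`F - x ∈ 2K` into two generators of `K` to have no `S`-part, which gives (1), and it shows that
`F - f + x` is again minimal in the sense above whenever `f - x ∈ K`, which gives (2).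
-/

section NumericalSemigroup

variable {S : Set ℤ} {F : ℤ}

theorem pos_of_mem_maxId (hS : IsNumSgrp S) {m : ℤ} (hm : m ∈ maxId S) : 0 < m :=
  lt_of_le_of_ne (hS.2.2.1 m hm.1) (Ne.symm hm.2)

theorem add_mem_maxId (hS : IsNumSgrp S) {a b : ℤ} (ha : a ∈ maxId S) (hb : b ∈ maxId S) :
    a + b ∈ maxId S :=
  ⟨hS.2.1 a ha.1 b hb.1, (add_pos (pos_of_mem_maxId hS ha) (pos_of_mem_maxId hS hb)).ne'⟩

theorem not_isMinGen_add {a b : ℤ} (ha : a ∈ maxId S) (hb : b ∈ maxId S) :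
    ¬ IsMinGen S (a + b) :=
  fun h => h.2 (Set.add_mem_add ha hb)

theorem mem_stdK_iff (hF : IsFrobOf S F) {a : ℤ} : a ∈ stdK S F ↔ F - a ∉ S :=
  ⟨And.right, fun h => ⟨not_lt.1 fun ha => h (hF.2 _ (by linarith)), h⟩⟩

theorem add_mem_stdK (hS : IsNumSgrp S) (hF : IsFrobOf S F) {a s : ℤ} (ha : a ∈ stdK S F)
    (hs : s ∈ S) : a + s ∈ stdK S F := by
  rw [mem_stdK_iff hF] at ha ⊢
  intro h
  exact ha (by simpa [sub_add] using hS.2.1 _ h _ hs)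

theorem sub_mem_PF_iff (hF : IsFrobOf S F) {a : ℤ} :
    F - a ∈ PF S S ↔ a ∈ stdK S F ∧ ∀ m ∈ maxId S, a - m ∉ stdK S F := by
  simp only [PF, subI, mem_sdiff, mem_ofPred_eq, mem_stdK_iff hF, not_not, sub_sub_eq_add_sub,
    sub_add_eq_add_sub]
  tauto

theorem sub_mem_stdK_of_mem_PF (hF : IsFrobOf S F) {f : ℤ} (hf : f ∈ PF S S) :
    F - f ∈ stdK S F :=
  ((sub_mem_PF_iff hF).1 (by rwa [sub_sub_cancel])).1

theorem mem_stdK_of_mem_PF (hF : IsFrobOf S F) {f : ℤ} (hf : f ∈ PF S S) (hfF : f ≠ F) :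
    f ∈ stdK S F := by
  rw [mem_stdK_iff hF]
  intro h
  have hFf : F - f ∈ maxId S := ⟨h, sub_ne_zero.2 hfF.symm⟩
  exact hF.1 (by simpa using hf.1 _ hFf)

theorem exists_PF_add_eq_of_mem_stdK (hS : IsNumSgrp S) (hF : IsFrobOf S F) {a : ℤ}
    (ha : a ∈ stdK S F) : ∃ f ∈ PF S S, ∃ s ∈ S, F - f + s = a := by
  induction hn : a.toNat using Nat.strong_induction_on generalizing a with
  | _ n ih =>
  by_cases hmin : ∀ m ∈ maxId S, a - m ∉ stdK S F
  · exact ⟨F - a, (sub_mem_PF_iff hF).2 ⟨ha, hmin⟩, 0, hS.1, by ring⟩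
  · push Not at hmin
    obtain ⟨m, hm, ham⟩ := hmin
    have hm0 := pos_of_mem_maxId hS hm
    have ham0 : 0 ≤ a - m := ham.1
    obtain ⟨f, hf, s, hs, hfs⟩ := ih _ (by omega) ham rfl
    exact ⟨f, hf, s + m, hS.2.1 _ hs _ hm.1, by linarith⟩

variable {X : Finset ℤ}
  (h2K : (stdK S F + stdK S F) \ stdK S F = (fun x => F - x) '' (X : Set ℤ) ∪ {F})
include h2K

theorem mem_of_sub_mem_stdK_add {w : ℤ} (hw : w ∈ maxId S)
    (h : F - w ∈ stdK S F + stdK S F) : w ∈ X := by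
  have hK : F - w ∉ stdK S F := fun hK => hK.2 (by simpa using hw.1)
  have : F - w ∈ (fun x => F - x) '' (X : Set ℤ) ∪ {F} := h2K ▸ ⟨h, hK⟩
  rcases this with ⟨x, hx, hxw⟩ | hwF
  · simpa [sub_right_inj.1 hxw] using hx
  · exact absurd (by simpa using hwF) hw.2

theorem sub_add_notMem_stdK_add (hS : IsNumSgrp S) (hX : ∀ x ∈ X, IsMinGen S x) {x t : ℤ}
    (hx : x ∈ X) (ht : t ∈ maxId S) : F - (x + t) ∉ stdK S F + stdK S F := fun h =>
  not_isMinGen_add (hX x hx).1 ht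
    (hX _ (mem_of_sub_mem_stdK_add h2K (add_mem_maxId hS (hX x hx).1 ht) h))

theorem exists_PF_add_eq_add (hS : IsNumSgrp S) (hF : IsFrobOf S F)
    (hX : ∀ x ∈ X, IsMinGen S x) {x : ℤ} (hx : x ∈ X) :
    ∃ fj ∈ PF S S, ∃ fk ∈ PF S S, fj + fk = F + x := by
  have hx2K : F - x ∈ (stdK S F + stdK S F) \ stdK S F := h2K ▸ Or.inl ⟨x, hx, rfl⟩
  obtain ⟨a, ha, b, hb, hab⟩ := hx2K.1
  obtain ⟨f, hf, s, hs, rfl⟩ := exists_PF_add_eq_of_mem_stdK hS hF ha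
  obtain ⟨g, hg, t, ht, hgt⟩ := exists_PF_add_eq_of_mem_stdK hS hF (add_mem_stdK hS hF hb hs)
  refine ⟨f, hf, g, hg, ?_⟩
  by_contra hne
  have ht0 : t ≠ 0 := fun h => hne (by subst h; linarith)
  refine sub_add_notMem_stdK_add h2K hS hX hx ⟨ht, ht0⟩ ?_
  rw [show F - (x + t) = (F - f) + (F - g) by linarith]
  exact Set.add_mem_add (sub_mem_stdK_of_mem_PF hF hf) (sub_mem_stdK_of_mem_PF hF hg)

theorem sub_mem_PF_or_exists_add_mem_PF (hS : IsNumSgrp S) (hF : IsFrobOf S F)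
    (hX : ∀ x ∈ X, IsMinGen S x) {f : ℤ} (hf : f ∈ PF S S) (hfF : f ≠ F) :
    F - f ∈ PF S S ∨ ∃ x ∈ X, F - f + x ∈ PF S S := by
  have hFf := sub_mem_stdK_of_mem_PF hF hf
  by_cases hmin : ∀ m ∈ maxId S, f - m ∉ stdK S F
  · exact Or.inl ((sub_mem_PF_iff hF).2 ⟨mem_stdK_of_mem_PF hF hf hfF, hmin⟩)
  push Not at hmin
  obtain ⟨x, hx, hfx⟩ := hmin
  have hxX : x ∈ X := mem_of_sub_mem_stdK_add h2K hx
    (by simpa using Set.add_mem_add hFf hfx)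
  refine Or.inr ⟨x, hxX, ?_⟩
  rw [show F - f + x = F - (f - x) by ring, sub_mem_PF_iff hF]
  refine ⟨hfx, fun t ht hfxt => sub_add_notMem_stdK_add h2K hS hX hxX ht ?_⟩
  rw [show F - (x + t) = (F - f) + (f - x - t) by ring]
  exact Set.add_mem_add hFf hfxt

end NumericalSemigroup

theorem stmt14 (S : Set ℤ) (hS : IsNumSgrp S) (F : ℤ) (hF : IsFrobOf S F)
    (X : Finset ℤ) (hX : ∀ x ∈ X, IsMinGen S x)
    (h2K : (stdK S F + stdK S F) \ stdK S F = (fun x => F - x) '' (X : Set ℤ) ∪ {F}) :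
    (∀ x ∈ X, ∃ fj ∈ PF S S, ∃ fk ∈ PF S S, fj + fk = F + x) ∧
    (∀ f ∈ PF S S \ {F}, F - f ∈ PF S S ∨ ∃ x ∈ X, F - f + x ∈ PF S S) := by
  exact ⟨fun x hx => exists_PF_add_eq_add h2K hS hF hX hx,
    fun f hf => sub_mem_PF_or_exists_add_mem_PF h2K hS hF hX hf.1 hf.2⟩
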